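/- Let k, b₀, b₁ be real constants with k·b₁ ≠ 0, and assume b₀ + b₁t > 0 for all t in an open interval J. Let q : J → EuclideanSpace ℝ (Fin 3) be twice differentiable with r(t) := ‖q(t)‖ > 0 on J, satisfying q''(t) = −ω(t)·r(t)^(−3)·q(t) with ω(t) = k/(b₀ + b₁t). Define the generalized Runge–Lenz vector A(t) := (b₀ + b₁t)·[ ‖q'(t)‖²·q(t) − ⟨q(t), q'(t)⟩·q'(t) − (k/(r(t)(b₀ + b₁t)))·q(t) ] − b₁·( q(t) × (q(t) × q'(t)) ). Then A(t) is constant on J. -/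

import Mathlib

open scoped RealInnerProductSpace

/-- The cross product on `EuclideanSpace ℝ (Fin 3)`. -/
noncomputable def cross3 (u v : EuclideanSpace ℝ (Fin 3)) : EuclideanSpace ℝ (Fin 3) :=
  WithLp.toLp 2 (fun i => u (i + 1) * v (i + 2) - u (i + 2) * v (i + 1))

/-!
Write `β = b₀ + b₁ t`, `U = ‖q'‖² q - ⟪q, q'⟫ q'` and `W = ⟪q, q'⟫ q - ‖q‖² q' = q × (q × q')`,
so that `A = β U - k q / ‖q‖ - b₁ W`. For any radial motion `q'' = c q` one has `U' = c W` and
`W' = U`, while `(q / ‖q‖)' = -W / ‖q‖³` always. Hence `A' = (β c + k / ‖q‖³) W`, which vanishes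
exactly for the Kepler coefficient `c = -k / (β ‖q‖³)`.
-/

theorem cross3_cross3 (u v : EuclideanSpace ℝ (Fin 3)) :
    cross3 u (cross3 u v) = ⟪u, v⟫ • u - ‖u‖ ^ 2 • v := by
  ext i
  simp only [cross3, PiLp.sub_apply, PiLp.smul_apply, smul_eq_mul, EuclideanSpace.real_norm_sq_eq,
    EuclideanSpace.inner_eq_star_dotProduct]
  fin_cases i <;> simp [Fin.sum_univ_three, dotProduct] <;> ring

section

variable {E : Type*} [NormedAddCommGroup E] [InnerProductSpace ℝ E] {q v : ℝ → E} {c t : ℝ}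

theorem HasDerivAt.norm {f : ℝ → E} {f' : E} (hf : HasDerivAt f f' t) (h0 : f t ≠ 0) :
    HasDerivAt (‖f ·‖) (⟪f t, f'⟫ / ‖f t‖) t := by
  have hsq : ‖f t‖ ^ 2 ≠ 0 := by positivity
  convert hf.norm_sq.sqrt hsq using 1
  · simp only [Real.sqrt_sq (norm_nonneg _)]
  · rw [Real.sqrt_sq (norm_nonneg _)]; ring

theorem hasDerivAt_inv_norm_smul (hq : HasDerivAt q (v t) t) (h0 : q t ≠ 0) :
    HasDerivAt (fun s => ‖q s‖⁻¹ • q s)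
      (-(‖q t‖ ^ 3)⁻¹ • (⟪q t, v t⟫ • q t - ‖q t‖ ^ 2 • v t)) t := by
  have hr : ‖q t‖ ≠ 0 := norm_ne_zero_iff.2 h0
  refine (((hq.norm h0).fun_inv hr).fun_smul hq).congr_deriv ?_
  match_scalars <;> field_simp

theorem hasDerivAt_norm_sq_smul_sub_inner_smul (hq : HasDerivAt q (v t) t)
    (hv : HasDerivAt v (c • q t) t) :
    HasDerivAt (fun s => ‖v s‖ ^ 2 • q s - ⟪q s, v s⟫ • v s)
      (c • (⟪q t, v t⟫ • q t - ‖q t‖ ^ 2 • v t)) t := by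
  refine ((hv.norm_sq.fun_smul hq).fun_sub ((hq.inner ℝ hv).fun_smul hv)).congr_deriv ?_
  simp only [inner_smul_right, real_inner_self_eq_norm_sq, real_inner_comm (q t)]
  module

theorem hasDerivAt_inner_smul_sub_norm_sq_smul (hq : HasDerivAt q (v t) t)
    (hv : HasDerivAt v (c • q t) t) :
    HasDerivAt (fun s => ⟪q s, v s⟫ • q s - ‖q s‖ ^ 2 • v s)
      (‖v t‖ ^ 2 • q t - ⟪q t, v t⟫ • v t) t := by
  refine (((hq.inner ℝ hv).fun_smul hq).fun_sub (hq.norm_sq.fun_smul hv)).congr_deriv ?_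
  simp only [inner_smul_right, real_inner_self_eq_norm_sq]
  module

/-- In dimension three the two brackets are `v × (q × v)` and `q × (q × v)`. -/
noncomputable def generalizedRungeLenz (k b₀ b₁ t : ℝ) (q v : E) : E :=
  (b₀ + b₁ * t) • (‖v‖ ^ 2 • q - ⟪q, v⟫ • v) - k • (‖q‖⁻¹ • q) - b₁ • (⟪q, v⟫ • q - ‖q‖ ^ 2 • v)

theorem hasDerivAt_generalizedRungeLenz {k b₀ b₁ : ℝ} (hq : HasDerivAt q (v t) t)
    (hv : HasDerivAt v (-(k / ((b₀ + b₁ * t) * ‖q t‖ ^ 3)) • q t) t) (h0 : q t ≠ 0)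
    (hβ : b₀ + b₁ * t ≠ 0) :
    HasDerivAt (fun s => generalizedRungeLenz k b₀ b₁ s (q s) (v s)) 0 t := by
  have hr : ‖q t‖ ≠ 0 := norm_ne_zero_iff.2 h0
  have hβ' : HasDerivAt (fun s => b₀ + b₁ * s) b₁ t := by
    simpa using ((hasDerivAt_id t).const_mul b₁).const_add b₀
  refine (((hβ'.fun_smul (hasDerivAt_norm_sq_smul_sub_inner_smul hq hv)).fun_sub
    ((hasDerivAt_inv_norm_smul hq h0).const_smul k)).fun_sub
    ((hasDerivAt_inner_smul_sub_norm_sq_smul hq hv).const_smul b₁)).congr_deriv ?_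
  match_scalars <;> field_simp <;> ring

end

theorem generalizedRungeLenz_eq_cross3 {k b₀ b₁ t : ℝ} (hβ : b₀ + b₁ * t ≠ 0)
    (q v : EuclideanSpace ℝ (Fin 3)) :
    generalizedRungeLenz k b₀ b₁ t q v = (b₀ + b₁ * t) • (‖v‖ ^ 2 • q - ⟪q, v⟫ • v
        - (k / (‖q‖ * (b₀ + b₁ * t))) • q) - b₁ • cross3 q (cross3 q v) := by
  rw [generalizedRungeLenz, cross3_cross3]
  match_scalars <;> field_simp

theorem generalized_RungeLenz_conserved_general (k b₀ b₁ : ℝ) (a b : ℝ)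
    (hpos : ∀ t ∈ Set.Ioo a b, 0 < b₀ + b₁ * t)
    (q q' q'' : ℝ → EuclideanSpace ℝ (Fin 3))
    (hq : ∀ t ∈ Set.Ioo a b, HasDerivAt q (q' t) t)
    (hq' : ∀ t ∈ Set.Ioo a b, HasDerivAt q' (q'' t) t)
    (hr : ∀ t ∈ Set.Ioo a b, 0 < ‖q t‖)
    (heom : ∀ t ∈ Set.Ioo a b,
      q'' t = (-(k / (b₀ + b₁ * t) * ‖q t‖ ^ (-3 : ℝ))) • q t)
    (A : ℝ → EuclideanSpace ℝ (Fin 3))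
    (hA : ∀ t, A t =
      (b₀ + b₁ * t) • (‖q' t‖ ^ 2 • q t - (⟪q t, q' t⟫ : ℝ) • q' t
        - (k / (‖q t‖ * (b₀ + b₁ * t))) • q t)
      - b₁ • cross3 (q t) (cross3 (q t) (q' t))) :
    ∀ t₁ ∈ Set.Ioo a b, ∀ t₂ ∈ Set.Ioo a b, A t₁ = A t₂ := by
  let R s := generalizedRungeLenz k b₀ b₁ s (q s) (q' s)
  have hAR : Set.EqOn A R (Set.Ioo a b) := fun s hs =>
    (hA s).trans (generalizedRungeLenz_eq_cross3 (hpos s hs).ne' _ _).symm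
  have hR : ∀ t ∈ Set.Ioo a b, HasDerivAt R 0 t := fun t ht => by
    have hq'' : q'' t = (-(k / ((b₀ + b₁ * t) * ‖q t‖ ^ 3))) • q t := by
      rw [heom t ht, Real.rpow_neg (norm_nonneg _), ← div_eq_mul_inv, div_div]
      norm_cast
    exact hasDerivAt_generalizedRungeLenz (hq t ht) (hq'' ▸ hq' t ht)
      (norm_pos_iff.1 (hr t ht)) (hpos t ht).ne'
  intro t₁ h₁ t₂ h₂
  rw [hAR h₁, hAR h₂]
  exact isOpen_Ioo.is_const_of_deriv_eq_zero isPreconnected_Ioo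
    (fun t ht => (hR t ht).differentiableAt.differentiableWithinAt) (fun t ht => (hR t ht).deriv)
    h₁ h₂

/-- For the time-dependent Kepler potential with `ω(t) = k/(b₀ + b₁ t)`, the generalized
Runge–Lenz vector `A` is a first integral on the open interval `J = (a, b)`. -/
theorem generalized_RungeLenz_conserved (k b₀ b₁ : ℝ) (hk : k * b₁ ≠ 0) (a b : ℝ)
    (hpos : ∀ t ∈ Set.Ioo a b, 0 < b₀ + b₁ * t)
    (q q' q'' : ℝ → EuclideanSpace ℝ (Fin 3))
    (hq : ∀ t ∈ Set.Ioo a b, HasDerivAt q (q' t) t)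
    (hq' : ∀ t ∈ Set.Ioo a b, HasDerivAt q' (q'' t) t)
    (hr : ∀ t ∈ Set.Ioo a b, 0 < ‖q t‖)
    (heom : ∀ t ∈ Set.Ioo a b,
      q'' t = (-(k / (b₀ + b₁ * t) * ‖q t‖ ^ (-3 : ℝ))) • q t)
    (A : ℝ → EuclideanSpace ℝ (Fin 3))
    (hA : ∀ t, A t =
      (b₀ + b₁ * t) • (‖q' t‖ ^ 2 • q t - (⟪q t, q' t⟫ : ℝ) • q' t
        - (k / (‖q t‖ * (b₀ + b₁ * t))) • q t)
      - b₁ • cross3 (q t) (cross3 (q t) (q' t))) :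
    ∀ t₁ ∈ Set.Ioo a b, ∀ t₂ ∈ Set.Ioo a b, A t₁ = A t₂ :=
  generalized_RungeLenz_conserved_general k b₀ b₁ a b hpos q q' q'' hq hq' hr heom A hA
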